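/- arXiv:1106.2870 — 4 statements merged into one kernel-verified Lean document; each statement's English description precedes it below -/
import Mathlib

section
/- Let M be a k x k symmetric matrix with entries M_{ij} = (1/2)*(2 - |S_{ij}|) where S_{ij} is a subset of {left, right} assigned to each pair (with S_{ij} = S_{ji} up to reversal, so |S_{ij}| is symmetric), such that the graph on k vertices with edges {i,j} (i != j) where |S_{ij}| = 2 contains no clique of size chi. Then (1/k^2) * 1^T M 1 >= 1/(2*(chi - 1)). -/
open Finset

lemma turan_aux {k r : ℕ} (hr : 1 ≤ r) (e : Fin k → Fin k → ℕ)
    (hd : ∀ i, e i i = 0) (hle : ∀ i j, e i j ≤ 1) (hs : ∀ i j, e i j = e j i)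
    (hcl : ¬ ∃ A : Finset (Fin k), A.card = r + 1 ∧
      ∀ i ∈ A, ∀ j ∈ A, i ≠ j → e i j = 1) :
    ∀ T : Finset (Fin k), r * (∑ i ∈ T, ∑ j ∈ T, e i j) ≤ (r - 1) * T.card ^ 2 := by
  intro T
  induction T using Finset.strongInduction with
  | _ T ih =>
  rcases T.eq_empty_or_nonempty with rfl | hT
  · simp
  classical
  obtain ⟨x, hx⟩ := hT
  set C : Finset (Finset (Fin k)) :=
    T.powerset.filter (fun A => ∀ i ∈ A, ∀ j ∈ A, i ≠ j → e i j = 1) with hC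
  have hCne : C.Nonempty := by
    refine ⟨{x}, ?_⟩
    simp [hC, Finset.singleton_subset_iff, hx]
  obtain ⟨A, hAC, hAmax⟩ := C.exists_max_image Finset.card hCne
  rw [hC, Finset.mem_filter, Finset.mem_powerset] at hAC
  obtain ⟨hAT, hAcl⟩ := hAC
  have hm1 : 1 ≤ A.card := by
    have := hAmax {x} (by simp [hC, Finset.singleton_subset_iff, hx])
    simpa using this
  have hmr : A.card ≤ r := by
    by_contra h
    push_neg at h
    obtain ⟨B, hBA, hBcard⟩ := Finset.exists_subset_card_eq (h : r + 1 ≤ A.card)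
    exact hcl ⟨B, hBcard, fun i hi j hj hij => hAcl i (hBA hi) j (hBA hj) hij⟩
  -- every vertex outside A has a non-neighbor in A
  have hout : ∀ v ∈ T \ A, ∑ j ∈ A, e v j ≤ A.card - 1 := by
    intro v hv
    rw [Finset.mem_sdiff] at hv
    have : ∃ j0 ∈ A, e v j0 = 0 := by
      by_contra hno
      push_neg at hno
      have hvA : ∀ j ∈ A, e v j = 1 := fun j hj =>
        le_antisymm (hle v j) (Nat.one_le_iff_ne_zero.mpr (hno j hj))
      have hmem : insert v A ∈ C := by
        rw [hC, Finset.mem_filter, Finset.mem_powerset]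
        refine ⟨Finset.insert_subset hv.1 hAT, ?_⟩
        intro i hi j hj hij
        rcases Finset.mem_insert.mp hi with hiv | hiA
        · rcases Finset.mem_insert.mp hj with hjv | hjA
          · exact absurd (hiv.trans hjv.symm) hij
          · rw [hiv]; exact hvA j hjA
        · rcases Finset.mem_insert.mp hj with hjv | hjA
          · rw [hjv, hs]; exact hvA i hiA
          · exact hAcl i hiA j hjA hij
      have := hAmax _ hmem
      rw [Finset.card_insert_of_notMem hv.2] at this
      omega
    obtain ⟨j0, hj0, hj0e⟩ := this
    calc ∑ j ∈ A, e v j = ∑ j ∈ A.erase j0, e v j := (Finset.sum_erase A hj0e).symm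
      _ ≤ ∑ j ∈ A.erase j0, 1 := Finset.sum_le_sum fun j _ => hle v j
      _ = (A.erase j0).card := by simp
      _ = A.card - 1 := Finset.card_erase_of_mem hj0
  have hin : ∀ i ∈ A, ∑ j ∈ A, e i j ≤ A.card - 1 := by
    intro i hi
    calc ∑ j ∈ A, e i j = ∑ j ∈ A.erase i, e i j := (Finset.sum_erase A (hd i)).symm
      _ ≤ ∑ j ∈ A.erase i, 1 := Finset.sum_le_sum fun j _ => hle i j
      _ = (A.erase i).card := by simp
      _ = A.card - 1 := Finset.card_erase_of_mem hi
  -- split the sum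
  have hsplit : T = A ∪ (T \ A) := (Finset.union_sdiff_of_subset hAT).symm
  have hdisj : Disjoint A (T \ A) := Finset.disjoint_sdiff
  set m := A.card with hm
  set p := (T \ A).card with hp
  have hcardT : T.card = m + p := by
    rw [hsplit, Finset.card_union_of_disjoint hdisj]
  have hE : ∑ i ∈ T, ∑ j ∈ T, e i j =
      (∑ i ∈ A, ∑ j ∈ A, e i j) + (∑ i ∈ A, ∑ j ∈ T \ A, e i j)
      + ((∑ i ∈ T \ A, ∑ j ∈ A, e i j) + ∑ i ∈ T \ A, ∑ j ∈ T \ A, e i j) := by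
    conv_lhs => rw [hsplit]
    rw [Finset.sum_union hdisj]
    congr 1
    · rw [← Finset.sum_add_distrib]
      exact Finset.sum_congr rfl fun i _ => (Finset.sum_union hdisj)
    · rw [← Finset.sum_add_distrib]
      exact Finset.sum_congr rfl fun i _ => (Finset.sum_union hdisj)
  have hcross : ∑ i ∈ A, ∑ j ∈ T \ A, e i j = ∑ i ∈ T \ A, ∑ j ∈ A, e i j := by
    rw [Finset.sum_comm]
    exact Finset.sum_congr rfl fun i _ => Finset.sum_congr rfl fun j _ => hs j i
  have h1 : ∑ i ∈ A, ∑ j ∈ A, e i j ≤ m * (m - 1) := by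
    calc ∑ i ∈ A, ∑ j ∈ A, e i j ≤ ∑ i ∈ A, (m - 1) := Finset.sum_le_sum hin
      _ = m * (m - 1) := by rw [Finset.sum_const, smul_eq_mul]
  have h2 : ∑ i ∈ T \ A, ∑ j ∈ A, e i j ≤ p * (m - 1) := by
    calc ∑ i ∈ T \ A, ∑ j ∈ A, e i j ≤ ∑ i ∈ T \ A, (m - 1) := Finset.sum_le_sum hout
      _ = p * (m - 1) := by rw [Finset.sum_const, smul_eq_mul]
  have h3 : r * (∑ i ∈ T \ A, ∑ j ∈ T \ A, e i j) ≤ (r - 1) * p ^ 2 := by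
    apply ih
    rw [Finset.ssubset_iff_of_subset (Finset.sdiff_subset)]
    obtain ⟨a, ha⟩ := Finset.card_pos.mp hm1
    exact ⟨a, hAT ha, by simp [ha]⟩
  -- arithmetic
  obtain ⟨q, hq⟩ : ∃ q, m = q + 1 := ⟨m - 1, by omega⟩
  have key : r * (m * (m - 1) + 2 * (p * (m - 1))) + (r - 1) * p ^ 2
      ≤ (r - 1) * (m + p) ^ 2 := by
    obtain ⟨s, hsr⟩ := le_iff_exists_add.mp (show q + 1 ≤ r by omega)
    subst hsr
    rw [hq]
    have h4 : q + 1 + s - 1 = q + s := by omega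
    rw [h4]
    simp only [Nat.add_sub_cancel]
    nlinarith [Nat.zero_le p, Nat.zero_le q, Nat.zero_le s]
  calc r * (∑ i ∈ T, ∑ j ∈ T, e i j)
      = r * ((∑ i ∈ A, ∑ j ∈ A, e i j) + (∑ i ∈ A, ∑ j ∈ T \ A, e i j)
        + ((∑ i ∈ T \ A, ∑ j ∈ A, e i j) + ∑ i ∈ T \ A, ∑ j ∈ T \ A, e i j)) := by rw [hE]
    _ ≤ r * (m * (m - 1) + 2 * (p * (m - 1))) + (r - 1) * p ^ 2 := by
        rw [hcross]
        calc r * ((∑ i ∈ A, ∑ j ∈ A, e i j) + (∑ i ∈ T \ A, ∑ j ∈ A, e i j)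
            + ((∑ i ∈ T \ A, ∑ j ∈ A, e i j) + ∑ i ∈ T \ A, ∑ j ∈ T \ A, e i j))
            ≤ r * ((m * (m - 1)) + p * (m - 1) + (p * (m - 1)
              + ∑ i ∈ T \ A, ∑ j ∈ T \ A, e i j)) := by
              apply Nat.mul_le_mul_left
              omega
          _ = r * (m * (m - 1) + 2 * (p * (m - 1)))
              + r * (∑ i ∈ T \ A, ∑ j ∈ T \ A, e i j) := by ring
          _ ≤ _ := by omega
    _ ≤ (r - 1) * (m + p) ^ 2 := key
    _ = (r - 1) * T.card ^ 2 := by rw [hcardT]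




/-- Tournament lower-bound computation: if `M_{ij} = (2 - |S_{ij}|)/2` where
`|S_{ij}|` is symmetric, `|S_{ii}| ≤ 1`, and the graph of pairs with
`|S_{ij}| = 2` has no clique of size `χ`, then `(1/k²) 1ᵀ M 1 ≥ 1/(2(χ-1))`. -/
theorem stmt_9 (k χ : ℕ) (hk : 0 < k) (hχ : 2 ≤ χ)
    (S : Fin k → Fin k → Finset (Fin 2))
    (hsymm : ∀ i j, (S i j).card = (S j i).card)
    (hdiag : ∀ i, (S i i).card ≤ 1)
    (hclique : ¬ ∃ T : Finset (Fin k), T.card = χ ∧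
      ∀ i ∈ T, ∀ j ∈ T, i ≠ j → (S i j).card = 2) :
    (1 : ℝ) / (2 * ((χ : ℝ) - 1)) ≤
      (1 / (k : ℝ) ^ 2) * ∑ i, ∑ j, ((2 : ℝ) - (S i j).card) / 2 := by
  classical
  set e : Fin k → Fin k → ℕ := fun i j =>
    if i ≠ j ∧ (S i j).card = 2 then 1 else 0 with he
  have hed : ∀ i, e i i = 0 := fun i => by simp [he]
  have hele : ∀ i j, e i j ≤ 1 := fun i j => by
    simp only [he]; split <;> omega
  have hes : ∀ i j, e i j = e j i := fun i j => by
    simp only [he, ne_eq, hsymm i j]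
    by_cases h : i = j <;> simp [h, eq_comm]
  have hcl : ¬ ∃ A : Finset (Fin k), A.card = (χ - 1) + 1 ∧
      ∀ i ∈ A, ∀ j ∈ A, i ≠ j → e i j = 1 := by
    rintro ⟨A, hAc, hA⟩
    refine hclique ⟨A, by omega, fun i hi j hj hij => ?_⟩
    have := hA i hi j hj hij
    simp only [he, ne_eq] at this
    by_contra hc
    simp [hij, hc] at this
  have hr1 : 1 ≤ χ - 1 := by omega
  have hT := turan_aux hr1 e hed hele hes hcl Finset.univ
  rw [Finset.card_univ, Fintype.card_fin] at hT
  -- pointwise: card ≤ 1 + e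
  have hpt : ∀ i j, (S i j).card ≤ 1 + e i j := by
    intro i j
    have h2 : (S i j).card ≤ 2 := le_trans (Finset.card_le_univ _) (by simp)
    by_cases hij : i = j
    · subst hij; simpa [hed] using hdiag i
    · by_cases hc : (S i j).card = 2
      · simp [he, hij, hc]
      · have : (S i j).card ≤ 1 := by omega
        omega
  set C : ℕ := ∑ i, ∑ j, (S i j).card with hC
  set E : ℕ := ∑ i, ∑ j, e i j with hE
  have hCE : C ≤ k ^ 2 + E := by
    have : C ≤ ∑ i : Fin k, ∑ j : Fin k, (1 + e i j) :=
      Finset.sum_le_sum fun i _ => Finset.sum_le_sum fun j _ => hpt i j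
    calc C ≤ ∑ i : Fin k, ∑ j : Fin k, (1 + e i j) := this
      _ = k ^ 2 + E := by
        simp [Finset.sum_add_distrib, hE, sq, Finset.mul_sum]
  -- pass to reals
  have hχR : (2 : ℝ) ≤ (χ : ℝ) := by exact_mod_cast hχ
  have hkR : (0 : ℝ) < (k : ℝ) ^ 2 := by positivity
  have hCER : (C : ℝ) ≤ (k : ℝ) ^ 2 + (E : ℝ) := by exact_mod_cast hCE
  have hTR : ((χ : ℝ) - 1) * E ≤ ((χ : ℝ) - 2) * (k : ℝ) ^ 2 := by
    have := hT
    have h1 : ((χ - 1 : ℕ) : ℝ) * ((E : ℕ) : ℝ) ≤ ((χ - 1 - 1 : ℕ) : ℝ) * ((k : ℝ) ^ 2) := by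
      exact_mod_cast this
    rw [Nat.cast_sub (by omega : 1 ≤ χ), Nat.cast_sub (by omega : 1 ≤ χ - 1),
      Nat.cast_sub (by omega : 1 ≤ χ)] at h1
    push_cast at h1 ⊢
    linarith
  have hsum : ∑ i, ∑ j, ((2 : ℝ) - ((S i j).card : ℝ)) / 2
      = (k : ℝ) ^ 2 - (C : ℝ) / 2 := by
    rw [hC]
    push_cast
    simp only [sub_div, Finset.sum_sub_distrib, Finset.sum_div]
    simp only [Finset.sum_const, Finset.card_univ, Fintype.card_fin, nsmul_eq_mul]
    ring
  rw [hsum]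
  rw [div_le_iff₀ (by linarith : (0:ℝ) < 2 * ((χ:ℝ) - 1))]
  have key : (k : ℝ) ^ 2 ≤ ((k : ℝ) ^ 2 - (C : ℝ) / 2) * (2 * ((χ : ℝ) - 1)) := by
    nlinarith [hCER, hTR, hχR, hkR]
  calc (1 : ℝ) = (1 / (k:ℝ)^2) * (k:ℝ)^2 := by field_simp
    _ ≤ (1 / (k:ℝ)^2) * (((k : ℝ) ^ 2 - (C : ℝ) / 2) * (2 * ((χ : ℝ) - 1))) := by
        apply mul_le_mul_of_nonneg_left key (by positivity)
    _ = 1 / (k:ℝ)^2 * ((k:ℝ)^2 - (C:ℝ)/2) * (2 * ((χ:ℝ) - 1)) := by ring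
end

section
/- Let M be a k x k symmetric matrix with entries in {0, 1/2, 1} such that: every diagonal entry is at least 1/2; if M_{ij} = 0 for some i != j then M_{ii} = M_{jj} = 1 and M_{il} + M_{jl} >= 1 for all l not in {i,j}. Then min { w^T M w : w >= 0, sum w_i = 1 } >= 1/2. -/
private lemma expand_aux {k : ℕ} (M : Matrix (Fin k) (Fin k) ℝ)
    (hsymm : ∀ i j, M i j = M j i) (x v : Fin k → ℝ) (t : ℝ) :
    ∑ a, ∑ b, (x a + t * v a) * M a b * (x b + t * v b) =
      (∑ a, ∑ b, x a * M a b * x b) + 2 * t * (∑ a, v a * ∑ b, M a b * x b)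
        + t ^ 2 * (∑ a, ∑ b, v a * M a b * v b) := by
  have h1 : ∀ a b : Fin k, (x a + t * v a) * M a b * (x b + t * v b)
      = x a * M a b * x b + t * (v a * M a b * x b) + t * (x a * M a b * v b)
        + t ^ 2 * (v a * M a b * v b) := by intros; ring
  have h2 : ∑ a, ∑ b, x a * M a b * v b = ∑ a, ∑ b, v a * M a b * x b := by
    rw [Finset.sum_comm]
    exact Finset.sum_congr rfl fun a _ => Finset.sum_congr rfl fun b _ => by
      rw [hsymm]; ring
  have h3 : ∑ a, ∑ b, v a * M a b * x b = ∑ a, v a * ∑ b, M a b * x b := by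
    exact Finset.sum_congr rfl fun a _ => by
      rw [Finset.mul_sum]
      exact Finset.sum_congr rfl fun b _ => by ring
  simp_rw [h1, Finset.sum_add_distrib, ← Finset.mul_sum]
  rw [h2, h3]; ring

/-- Matrix abstraction of the directed-triangle lower bound: if `M` is a
symmetric matrix with entries in `{0, 1/2, 1}`, diagonal entries at least
`1/2`, and whenever `M_{ij} = 0` (`i ≠ j`) one has `M_{ii} = M_{jj} = 1` and
`M_{il} + M_{jl} ≥ 1` for all `l ∉ {i,j}`, then the minimum of `wᵀ M w` over
the simplex is at least `1/2`. -/
theorem stmt_11 (k : ℕ) (M : Matrix (Fin k) (Fin k) ℝ)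
    (hsymm : ∀ i j, M i j = M j i)
    (hvals : ∀ i j, M i j = 0 ∨ M i j = 1 / 2 ∨ M i j = 1)
    (hdiag : ∀ i, (1 : ℝ) / 2 ≤ M i i)
    (hzero : ∀ i j, i ≠ j → M i j = 0 →
      M i i = 1 ∧ M j j = 1 ∧ ∀ l, l ≠ i → l ≠ j → 1 ≤ M i l + M j l) :
    ∀ w : Fin k → ℝ, (∀ i, 0 ≤ w i) → ∑ i, w i = 1 →
      (1 : ℝ) / 2 ≤ ∑ i, ∑ j, w i * M i j * w j := by
  intro w hw hws
  set f : (Fin k → ℝ) → ℝ := fun v => ∑ a, ∑ b, v a * M a b * v b with hf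
  have hcont : Continuous f := by
    apply continuous_finset_sum; intro a _
    apply continuous_finset_sum; intro b _
    exact ((continuous_apply a).mul continuous_const).mul (continuous_apply b)
  have hwmem : w ∈ stdSimplex ℝ (Fin k) := ⟨hw, hws⟩
  obtain ⟨x, hxmem, hxmin⟩ :=
    (isCompact_stdSimplex ℝ (Fin k)).exists_isMinOn ⟨w, hwmem⟩ hcont.continuousOn
  obtain ⟨hx0, hxs⟩ := hxmem
  set r : Fin k → ℝ := fun a => ∑ b, M a b * x b with hr
  -- first-order optimality: r is monotone from the support
  have key : ∀ i j : Fin k, 0 < x i → r i ≤ r j := by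
    intro i j hxi
    by_cases hij : i = j
    · exact hij ▸ le_refl _
    by_contra hlt
    push_neg at hlt
    set v : Fin k → ℝ := fun l => (if l = j then (1:ℝ) else 0) - (if l = i then 1 else 0)
      with hv
    set q : ℝ := ∑ a, ∑ b, v a * M a b * v b with hq
    have hvr : ∑ a, v a * r a = r j - r i := by
      simp only [hv, sub_mul, one_mul, Finset.sum_sub_distrib, ite_mul, zero_mul]
      rw [Finset.sum_ite_eq' Finset.univ j r, Finset.sum_ite_eq' Finset.univ i r]
      simp
    have hexp : ∀ t : ℝ, f (fun l => x l + t * v l) = f x + 2 * t * (r j - r i) + t ^ 2 * q := by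
      intro t
      have := expand_aux M hsymm x v t
      simp only [hf, hq]
      rw [this, hvr]
    have hmem : ∀ t : ℝ, 0 < t → t ≤ x i → (fun l => x l + t * v l) ∈ stdSimplex ℝ (Fin k) := by
      intro t ht htle
      have hji : j ≠ i := fun h => hij h.symm
      constructor
      · intro m
        show 0 ≤ x m + t * v m
        by_cases hmj : m = j
        · have hv1 : v m = 1 := by subst hmj; simp [hv, hji]
          rw [hv1]
          have := hx0 m; linarith
        by_cases hmi : m = i
        · have hv1 : v m = -1 := by subst hmi; simp [hv, hij]
          subst hmi
          rw [hv1]; linarith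
        · have hv1 : v m = 0 := by simp [hv, hmi, hmj]
          rw [hv1]
          have := hx0 m; linarith
      · have hvs : ∑ l, v l = 0 := by
          simp [hv, Finset.sum_sub_distrib]
        simp_rw [Finset.sum_add_distrib, ← Finset.mul_sum, hvs, hxs]
        ring
    set d : ℝ := r i - r j with hd
    have hd0 : 0 < d := by simp only [hd]; linarith
    set t : ℝ := min (x i) (d / (|q| + 1)) with ht
    have habs : (0:ℝ) < |q| + 1 := by positivity
    have ht0 : 0 < t := lt_min hxi (div_pos hd0 habs)
    have htle : t ≤ x i := min_le_left _ _
    have htd : t * (|q| + 1) ≤ d := by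
      have h2 : t ≤ d / (|q| + 1) := min_le_right _ _
      calc t * (|q| + 1) ≤ (d / (|q| + 1)) * (|q| + 1) := by
            apply mul_le_mul_of_nonneg_right h2 (le_of_lt habs)
        _ = d := by field_simp
    have hmin : f x ≤ f (fun l => x l + t * v l) := hxmin (hmem t ht0 htle)
    rw [hexp t] at hmin
    -- f x ≤ f x + 2 t (r j - r i) + t² q
    have hq1 : q ≤ |q| := le_abs_self q
    have hq2 : -|q| ≤ q := neg_abs_le q
    nlinarith [sq_nonneg t, mul_pos ht0 hd0]
  -- pick a support element
  have hsupp : ∃ i, 0 < x i := by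
    by_contra h
    push_neg at h
    have : ∀ i, x i = 0 := fun i => le_antisymm (h i) (hx0 i)
    rw [Finset.sum_congr rfl fun i _ => this i] at hxs
    simp at hxs
  obtain ⟨i, hi⟩ := hsupp
  have hreq : ∀ l, 0 < x l → r l = r i := fun l hl => le_antisymm (key l i hl) (key i l hi)
  have hfx : f x = r i := by
    have h1 : f x = ∑ a, x a * r a := by
      simp only [hf, hr]
      exact Finset.sum_congr rfl fun a _ => by
        rw [Finset.mul_sum]
        exact Finset.sum_congr rfl fun b _ => by ring
    have h2 : ∀ a, x a * r a = x a * r i := by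
      intro a
      rcases lt_or_eq_of_le (hx0 a) with h | h
      · rw [hreq a h]
      · rw [← h]; ring
    rw [h1, Finset.sum_congr rfl fun a _ => h2 a, ← Finset.sum_mul, hxs, one_mul]
  have hri : (1:ℝ)/2 ≤ r i := by
    by_cases hzex : ∃ j, 0 < x j ∧ M i j = 0
    · obtain ⟨j, hj, hMij⟩ := hzex
      have hij : i ≠ j := by
        intro h
        rw [h] at hMij
        have := hdiag j; rw [hMij] at this; linarith
      obtain ⟨hMii, hMjj, hl⟩ := hzero i j hij hMij
      have hrj : r j = r i := hreq j hj
      have hsum : 1 ≤ r i + r j := by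
        have h1 : r i + r j = ∑ l, (M i l + M j l) * x l := by
          simp only [hr, add_mul, Finset.sum_add_distrib]
        rw [h1, ← hxs]
        apply Finset.sum_le_sum
        intro l _
        have hx0l := hx0 l
        have hge : 1 ≤ M i l + M j l := by
          by_cases hli : l = i
          · subst hli
            have : M l l = 1 := hMii
            have hji : M l l + M j l = 1 + 0 := by
              rw [this, hsymm j l, hMij]
            rw [hMii, hsymm j l, hMij]; norm_num
          by_cases hlj : l = j
          · subst hlj
            rw [hMij, hMjj]; norm_num
          · exact hl l hli hlj
        nlinarith
      linarith
    · push_neg at hzex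
      have : ∀ l, (1:ℝ)/2 * x l ≤ M i l * x l := by
        intro l
        rcases lt_or_eq_of_le (hx0 l) with h | h
        · have hne := hzex l h
          have : (1:ℝ)/2 ≤ M i l := by
            rcases hvals i l with h0 | h0 | h0
            · exact absurd h0 hne
            · rw [h0]
            · rw [h0]; norm_num
          nlinarith
        · rw [← h]; ring_nf; rfl
      calc (1:ℝ)/2 = 1/2 * ∑ l, x l := by rw [hxs]; ring
        _ = ∑ l, 1/2 * x l := by rw [Finset.mul_sum]
        _ ≤ ∑ l, M i l * x l := Finset.sum_le_sum fun l _ => this l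
        _ = r i := rfl
  have hfw : f x ≤ f w := hxmin hwmem
  calc (1:ℝ)/2 ≤ r i := hri
    _ = f x := hfx.symm
    _ ≤ f w := hfw
end

section
/- Let M be a k x k real symmetric matrix, let w = (w_1,...,w_k) be a nonnegative vector with sum 1, and let l be an integer with w_i * l >= 2 for all i. Form the blown-up matrix M' of size (sum_i floor(w_i*l)) whose (i,j) block is the constant floor(w_i*l) x floor(w_j*l) block with value M_{ij}. If all entries of M are nonnegative, then (1/N^2) * 1^T M' 1 <= (l^2 / (l-k)^2) * w^T M w, where N = sum_i floor(w_i*l). -/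
/-- Blow-up estimate: the uniform-weight value of the blow-up of `M` with
block sizes `⌊wᵢ l⌋` is at most `l²/(l-k)²` times the optimal-weight value
`wᵀ M w`. -/
theorem stmt_14 (k : ℕ) (l : ℕ) (M : Matrix (Fin k) (Fin k) ℝ)
    (hsymm : ∀ i j, M i j = M j i)
    (hnonneg : ∀ i j, 0 ≤ M i j)
    (w : Fin k → ℝ) (hw0 : ∀ i, 0 ≤ w i) (hwsum : ∑ i, w i = 1)
    (hl : ∀ i, 2 ≤ w i * l)
    (N : ℝ) (hN : N = ∑ i, (⌊w i * (l : ℝ)⌋₊ : ℝ)) :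
    (1 / N ^ 2) * ∑ i, ∑ j, (⌊w i * (l : ℝ)⌋₊ : ℝ) * (⌊w j * (l : ℝ)⌋₊ : ℝ) * M i j ≤
      ((l : ℝ) ^ 2 / ((l : ℝ) - (k : ℝ)) ^ 2) * ∑ i, ∑ j, w i * M i j * w j := by
  rcases Nat.eq_zero_or_pos k with hk | hk
  · subst hk; simp
  have hk1 : (1:ℝ) ≤ k := by exact_mod_cast hk
  have h2k : (2:ℝ) * k ≤ l := by
    have h := Finset.sum_le_sum (fun i (_ : i ∈ Finset.univ) => hl i)
    have h2 : ∑ i : Fin k, w i * (l:ℝ) = (l:ℝ) := by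
      rw [← Finset.sum_mul, hwsum, one_mul]
    simpa [Finset.sum_const, Finset.card_univ, mul_comm, h2] using h
  have hlk0 : 0 < (l:ℝ) - k := by linarith
  have hNge : (l:ℝ) - k ≤ N := by
    rw [hN]
    have h1 : ∑ i : Fin k, (w i * (l:ℝ) - 1) ≤ ∑ i, (⌊w i * (l:ℝ)⌋₊ : ℝ) := by
      apply Finset.sum_le_sum; intro i _
      have := Nat.lt_floor_add_one (w i * (l:ℝ)); linarith
    have h2 : ∑ i : Fin k, (w i * (l:ℝ) - 1) = (l:ℝ) - k := by
      rw [Finset.sum_sub_distrib, ← Finset.sum_mul, hwsum]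
      simp
    linarith
  have hNpos : 0 < N := lt_of_lt_of_le hlk0 hNge
  have hSnn : 0 ≤ ∑ i, ∑ j, (⌊w i * (l:ℝ)⌋₊ : ℝ) * (⌊w j * (l:ℝ)⌋₊ : ℝ) * M i j := by
    apply Finset.sum_nonneg; intro i _
    apply Finset.sum_nonneg; intro j _
    exact mul_nonneg (mul_nonneg (Nat.cast_nonneg _) (Nat.cast_nonneg _)) (hnonneg i j)
  have key : ∑ i, ∑ j, (⌊w i * (l:ℝ)⌋₊ : ℝ) * (⌊w j * (l:ℝ)⌋₊ : ℝ) * M i j ≤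
      (l:ℝ)^2 * ∑ i, ∑ j, w i * M i j * w j := by
    have step : ∑ i, ∑ j, (⌊w i * (l:ℝ)⌋₊ : ℝ) * (⌊w j * (l:ℝ)⌋₊ : ℝ) * M i j ≤
        ∑ i, ∑ j, (w i * (l:ℝ)) * (w j * (l:ℝ)) * M i j := by
      apply Finset.sum_le_sum; intro i _
      apply Finset.sum_le_sum; intro j _
      have hfi : (⌊w i * (l:ℝ)⌋₊ : ℝ) ≤ w i * l := Nat.floor_le (by linarith [hl i])
      have hfj : (⌊w j * (l:ℝ)⌋₊ : ℝ) ≤ w j * l := Nat.floor_le (by linarith [hl j])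
      have hfi0 : (0:ℝ) ≤ (⌊w i * (l:ℝ)⌋₊ : ℝ) := Nat.cast_nonneg _
      have hfj0 : (0:ℝ) ≤ (⌊w j * (l:ℝ)⌋₊ : ℝ) := Nat.cast_nonneg _
      have hm : (⌊w i * (l:ℝ)⌋₊ : ℝ) * (⌊w j * (l:ℝ)⌋₊ : ℝ) ≤ (w i * l) * (w j * l) :=
        mul_le_mul hfi hfj hfj0 (by linarith [hl i])
      exact mul_le_mul_of_nonneg_right hm (hnonneg i j)
    calc _ ≤ ∑ i, ∑ j, (w i * (l:ℝ)) * (w j * (l:ℝ)) * M i j := step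
      _ = (l:ℝ)^2 * ∑ i, ∑ j, w i * M i j * w j := by
        simp only [Finset.mul_sum]
        apply Finset.sum_congr rfl; intro i _
        apply Finset.sum_congr rfl; intro j _
        ring
  have hmono : (1 / N ^ 2 : ℝ) ≤ 1 / ((l:ℝ) - k) ^ 2 := by
    apply one_div_le_one_div_of_le (by positivity)
    have := sq_le_sq' (by linarith) hNge
    nlinarith
  calc (1 / N ^ 2) * ∑ i, ∑ j, (⌊w i * (l:ℝ)⌋₊ : ℝ) * (⌊w j * (l:ℝ)⌋₊ : ℝ) * M i j
      ≤ (1 / ((l:ℝ) - k) ^ 2) * ∑ i, ∑ j, (⌊w i * (l:ℝ)⌋₊ : ℝ) * (⌊w j * (l:ℝ)⌋₊ : ℝ) * M i j :=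
        mul_le_mul_of_nonneg_right hmono hSnn
    _ ≤ (1 / ((l:ℝ) - k) ^ 2) * ((l:ℝ)^2 * ∑ i, ∑ j, w i * M i j * w j) :=
        mul_le_mul_of_nonneg_left key (by positivity)
    _ = ((l : ℝ) ^ 2 / ((l : ℝ) - (k : ℝ)) ^ 2) * ∑ i, ∑ j, w i * M i j * w j := by ring
end

section
/- Let c be a {1,2,3}-edge-coloring of K_n on a vertex set equipartitioned into two parts V_1, V_2. Suppose c' is obtained from c by recoloring edges only to color 3 (each edit changes an edge of color 1 or 2 to color 3), and c' contains no triangle with two edges of color 1 and one edge of color 2, where c assigns color 1 to all edges between V_1 and V_2 and color 2 to all edges within V_1 and within V_2. Let G be the graph of edges recolored to color 3. Then the complement of G contains no triangle with vertices in both V_1 and V_2, and hence G has at least C(n,2) - ((1/2)*C(n,2) + n) edges. -/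
open Finset

lemma aux_count {V : Type*} [Fintype V] [DecidableEq V] (H : SimpleGraph V)
    [DecidableRel H.Adj] (V₁ : Finset V)
    (htri : ∀ x y z : V, H.Adj x y → H.Adj x z → H.Adj y z →
      (x ∈ V₁ ∧ y ∈ V₁ ∧ z ∈ V₁) ∨ (x ∉ V₁ ∧ y ∉ V₁ ∧ z ∉ V₁)) :
    ∀ (m : ℕ) (s : Finset V), s.card = m →
      (s.filter (· ∈ V₁)).card ≤ (s.filter (· ∉ V₁)).card + 1 →
      (s.filter (· ∉ V₁)).card ≤ (s.filter (· ∈ V₁)).card + 1 →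
      2 * ((s ×ˢ s).filter fun p => H.Adj p.1 p.2).card ≤ m ^ 2 + 3 * m := by
  intro m
  induction m using Nat.strong_induction_on with
  | _ m ih =>
    intro s hs hbal1 hbal2
    by_cases hcross : ∃ x ∈ s, ∃ z ∈ s, x ∈ V₁ ∧ z ∉ V₁ ∧ H.Adj x z
    · obtain ⟨x, hxs, z, hzs, hxV, hzV, hadj⟩ := hcross
      have hxz : x ≠ z := fun h => hzV (h ▸ hxV)
      set s' : Finset V := s \ {x, z} with hs'
      -- disjoint neighborhoods
      have hdisj : Disjoint (s.filter (H.Adj x)) (s.filter (H.Adj z)) := by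
        rw [Finset.disjoint_left]
        intro y hy1 hy2
        simp only [mem_filter] at hy1 hy2
        rcases htri x z y hadj hy1.2 hy2.2 with ⟨_, h, _⟩ | ⟨h, _, _⟩
        exacts [hzV h, h hxV]
      have hdeg : (s.filter (H.Adj x)).card + (s.filter (H.Adj z)).card ≤ m := by
        rw [← card_union_of_disjoint hdisj]
        calc _ ≤ s.card := card_le_card (union_subset (filter_subset _ _) (filter_subset _ _))
        _ = m := hs
      -- covering
      have hcover : ((s ×ˢ s).filter fun p => H.Adj p.1 p.2) ⊆
          (((s' ×ˢ s').filter fun p => H.Adj p.1 p.2) ∪ ({x} ×ˢ s.filter (H.Adj x))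
            ∪ (s.filter (H.Adj x) ×ˢ {x})) ∪ ({z} ×ˢ s.filter (H.Adj z))
            ∪ (s.filter (H.Adj z) ×ˢ {z}) := by
        intro p hp
        simp only [mem_filter, mem_product] at hp
        obtain ⟨⟨h1, h2⟩, hA⟩ := hp
        simp only [mem_union, mem_filter, mem_product, mem_singleton, hs', mem_sdiff,
          mem_insert, not_or]
        by_cases e1x : p.1 = x
        · exact Or.inl (Or.inl (Or.inl (Or.inr ⟨e1x, h2, e1x ▸ hA⟩)))
        by_cases e1z : p.1 = z
        · exact Or.inl (Or.inr ⟨e1z, h2, e1z ▸ hA⟩)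
        by_cases e2x : p.2 = x
        · exact Or.inl (Or.inl (Or.inr ⟨⟨h1, e2x ▸ hA.symm⟩, e2x⟩))
        by_cases e2z : p.2 = z
        · exact Or.inr ⟨⟨h1, e2z ▸ hA.symm⟩, e2z⟩
        · exact Or.inl (Or.inl (Or.inl (Or.inl ⟨⟨⟨h1, e1x, e1z⟩, h2, e2x, e2z⟩, hA⟩)))
      have hcard : ((s ×ˢ s).filter fun p => H.Adj p.1 p.2).card ≤
          ((s' ×ˢ s').filter fun p => H.Adj p.1 p.2).card
            + 2 * (s.filter (H.Adj x)).card + 2 * (s.filter (H.Adj z)).card := by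
        calc _ ≤ _ := card_le_card hcover
        _ ≤ _ := le_trans (card_union_le _ _) (Nat.add_le_add_right (le_trans (card_union_le _ _)
              (Nat.add_le_add_right (le_trans (card_union_le _ _) (Nat.add_le_add_right
                (card_union_le _ _) _)) _)) _)
        _ ≤ _ := by
              simp only [card_product, card_singleton, one_mul, mul_one]
              ring_nf
              omega
      -- cards of s'
      have hpair : ({x, z} : Finset V) ⊆ s := by
        intro y hy; simp only [mem_insert, mem_singleton] at hy
        rcases hy with rfl | rfl; exacts [hxs, hzs]
      have hcp : ({x, z} : Finset V).card = 2 := card_pair hxz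
      have hm2 : 2 ≤ m := by rw [← hs, ← hcp]; exact card_le_card hpair
      have hs'c : s'.card = m - 2 := by rw [hs', card_sdiff_of_subset hpair, hcp, hs]
      have eA : s'.filter (· ∈ V₁) = (s.filter (· ∈ V₁)).erase x := by
        ext y
        simp only [hs', mem_filter, mem_sdiff, mem_insert, mem_singleton, mem_erase, not_or]
        constructor
        · rintro ⟨⟨hys, hyx, _⟩, hyV⟩; exact ⟨hyx, hys, hyV⟩
        · rintro ⟨hyx, hys, hyV⟩; exact ⟨⟨hys, hyx, fun h => hzV (h ▸ hyV)⟩, hyV⟩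
      have eB : s'.filter (· ∉ V₁) = (s.filter (· ∉ V₁)).erase z := by
        ext y
        simp only [hs', mem_filter, mem_sdiff, mem_insert, mem_singleton, mem_erase, not_or]
        constructor
        · rintro ⟨⟨hys, _, hyz⟩, hyV⟩; exact ⟨hyz, hys, hyV⟩
        · rintro ⟨hyz, hys, hyV⟩; exact ⟨⟨hys, fun h => hyV (h ▸ hxV), hyz⟩, hyV⟩
      have hxA : x ∈ s.filter (· ∈ V₁) := mem_filter.mpr ⟨hxs, hxV⟩
      have hzB : z ∈ s.filter (· ∉ V₁) := mem_filter.mpr ⟨hzs, hzV⟩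
      have cA : (s'.filter (· ∈ V₁)).card = (s.filter (· ∈ V₁)).card - 1 := by
        rw [eA, card_erase_of_mem hxA]
      have cB : (s'.filter (· ∉ V₁)).card = (s.filter (· ∉ V₁)).card - 1 := by
        rw [eB, card_erase_of_mem hzB]
      have hA1 : 1 ≤ (s.filter (· ∈ V₁)).card := card_pos.mpr ⟨x, hxA⟩
      have hB1 : 1 ≤ (s.filter (· ∉ V₁)).card := card_pos.mpr ⟨z, hzB⟩
      have hIH := ih (m - 2) (by omega) s' hs'c (by omega) (by omega)
      obtain ⟨k, rfl⟩ : ∃ k, m = k + 2 := ⟨m - 2, by omega⟩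
      have hk : k + 2 - 2 = k := by omega
      rw [hk] at hIH
      nlinarith [hdeg, hcard, hIH]
    · -- no cross edges inside s
      push_neg at hcross
      set A := s.filter (· ∈ V₁) with hA
      set B := s.filter (· ∉ V₁) with hB
      have hsub : ((s ×ˢ s).filter fun p => H.Adj p.1 p.2) ⊆ A ×ˢ A ∪ B ×ˢ B := by
        intro p hp
        simp only [mem_filter, mem_product] at hp
        obtain ⟨⟨h1, h2⟩, hadj⟩ := hp
        simp only [mem_union, mem_product, hA, hB, mem_filter]
        by_cases hp1 : p.1 ∈ V₁
        · left
          refine ⟨⟨h1, hp1⟩, h2, ?_⟩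
          by_contra hp2
          exact (hcross p.1 h1 p.2 h2 hp1 hp2) hadj
        · right
          refine ⟨⟨h1, hp1⟩, h2, ?_⟩
          intro hp2
          exact (hcross p.2 h2 p.1 h1 hp2 hp1) hadj.symm
      have hcard : ((s ×ˢ s).filter fun p => H.Adj p.1 p.2).card ≤ A.card * A.card + B.card * B.card := by
        calc _ ≤ (A ×ˢ A ∪ B ×ˢ B).card := card_le_card hsub
        _ ≤ (A ×ˢ A).card + (B ×ˢ B).card := card_union_le _ _
        _ = A.card * A.card + B.card * B.card := by rw [card_product, card_product]
      have habm : A.card + B.card = m := by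
        rw [hA, hB, card_filter_add_card_filter_not]; exact hs
      nlinarith [hbal1, hbal2, hcard]
lemma two_choose_two (k : ℕ) : 2 * k.choose 2 + k = k ^ 2 := by
  induction k with
  | zero => rfl
  | succ m ihm =>
    rw [Nat.choose_succ_succ, Nat.choose_one_right]
    nlinarith [ihm]

/-- Lower-bound setup for forbidding the `(1,1,2)`-triangle: if `c` colors the
edges of `K_n` between `V₁` and its complement with `1` and the edges inside
the parts with `2`, `c'` is obtained by recoloring edges only to color `3`,
`c'` has no triangle with two edges of color `1` and one of color `2`, and
`G` is the graph of recolored edges, then the complement of `G` has no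
triangle with vertices in both parts, and `G` has at least
`C(n,2) - (C(n,2)/2 + n)` edges. -/
theorem stmt_17 (n : ℕ) (V₁ : Finset (Fin n)) (hV₁ : V₁.card = n / 2)
    (c c' : Sym2 (Fin n) → ℕ)
    (hc : ∀ x y : Fin n, x ≠ y →
      c s(x, y) = if (x ∈ V₁ ↔ y ∈ V₁) then 2 else 1)
    (hedit : ∀ e : Sym2 (Fin n), c' e = c e ∨ c' e = 3)
    (htri : ∀ x y z : Fin n, x ≠ y → y ≠ z → x ≠ z →
      ¬ (c' s(x, y) = 1 ∧ c' s(x, z) = 1 ∧ c' s(y, z) = 2))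
    (G : SimpleGraph (Fin n)) [DecidableRel G.Adj]
    (hG : ∀ x y : Fin n, G.Adj x y ↔ x ≠ y ∧ c' s(x, y) = 3) :
    (∀ x y z : Fin n, Gᶜ.Adj x y → Gᶜ.Adj x z → Gᶜ.Adj y z →
      ¬ ((x ∈ V₁ ∨ y ∈ V₁ ∨ z ∈ V₁) ∧ (x ∉ V₁ ∨ y ∉ V₁ ∨ z ∉ V₁))) ∧
    ((n.choose 2 : ℚ) - ((n.choose 2 : ℚ) / 2 + n) ≤ G.edgeFinset.card) := by
  have part1 : ∀ x y z : Fin n, Gᶜ.Adj x y → Gᶜ.Adj x z → Gᶜ.Adj y z →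
      ¬ ((x ∈ V₁ ∨ y ∈ V₁ ∨ z ∈ V₁) ∧ (x ∉ V₁ ∨ y ∉ V₁ ∨ z ∉ V₁)) := by
    intro x y z hxy hxz hyz hmem
    obtain ⟨hm1, hm2⟩ := hmem
    rw [SimpleGraph.compl_adj] at hxy hxz hyz
    have cxy : c' s(x, y) = if (x ∈ V₁ ↔ y ∈ V₁) then 2 else 1 := by
      rcases hedit s(x, y) with h | h
      · rw [h]; exact hc x y hxy.1
      · exact absurd ((hG x y).mpr ⟨hxy.1, h⟩) hxy.2
    have cxz : c' s(x, z) = if (x ∈ V₁ ↔ z ∈ V₁) then 2 else 1 := by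
      rcases hedit s(x, z) with h | h
      · rw [h]; exact hc x z hxz.1
      · exact absurd ((hG x z).mpr ⟨hxz.1, h⟩) hxz.2
    have cyz : c' s(y, z) = if (y ∈ V₁ ↔ z ∈ V₁) then 2 else 1 := by
      rcases hedit s(y, z) with h | h
      · rw [h]; exact hc y z hyz.1
      · exact absurd ((hG y z).mpr ⟨hyz.1, h⟩) hyz.2
    have h1 := htri x y z hxy.1 hyz.1 hxz.1
    have h2 := htri y x z hxy.1.symm hxz.1 hyz.1
    have h3 := htri z x y hxz.1.symm hxy.1 hyz.1.symm
    rw [show s(y, x) = s(x, y) from Sym2.eq_swap] at h2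
    rw [show s(z, x) = s(x, z) from Sym2.eq_swap,
        show s(z, y) = s(y, z) from Sym2.eq_swap] at h3
    rw [cxy, cxz, cyz] at h1 h2 h3
    by_cases hx : x ∈ V₁ <;> by_cases hy : y ∈ V₁ <;> by_cases hz : z ∈ V₁ <;> simp_all
  refine ⟨part1, ?_⟩
  have htri' : ∀ x y z : Fin n, Gᶜ.Adj x y → Gᶜ.Adj x z → Gᶜ.Adj y z →
      (x ∈ V₁ ∧ y ∈ V₁ ∧ z ∈ V₁) ∨ (x ∉ V₁ ∧ y ∉ V₁ ∧ z ∉ V₁) := by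
    intro x y z h1 h2 h3
    have := part1 x y z h1 h2 h3
    tauto
  have hfA : (univ.filter (· ∈ V₁) : Finset (Fin n)).card = n / 2 := by
    rw [filter_univ_mem]; exact hV₁
  have hfB : (univ.filter (· ∉ V₁) : Finset (Fin n)).card = n - n / 2 := by
    have := card_filter_add_card_filter_not (s := (univ : Finset (Fin n)))
      (p := (· ∈ V₁))
    simp only [card_univ, Fintype.card_fin] at this
    omega
  have key := aux_count Gᶜ V₁ htri' n univ (by simp) (by rw [hfA, hfB]; omega)
    (by rw [hfA, hfB]; omega)
  have hD : ((univ ×ˢ univ).filter fun p : Fin n × Fin n => Gᶜ.Adj p.1 p.2).card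
      = 2 * Gᶜ.edgeFinset.card := by
    rw [SimpleGraph.two_mul_card_edgeFinset]
    congr 1
  rw [hD] at key
  have hsum : G.edgeFinset.card + Gᶜ.edgeFinset.card = n.choose 2 := by
    have hd : Disjoint G.edgeFinset Gᶜ.edgeFinset :=
      SimpleGraph.disjoint_edgeFinset.mpr disjoint_compl_right
    rw [← card_union_of_disjoint hd, ← SimpleGraph.edgeFinset_sup]
    have htop : G ⊔ Gᶜ = ⊤ := sup_compl_eq_top
    rw [SimpleGraph.edgeFinset_card]
    have : Fintype.card ((G ⊔ Gᶜ).edgeSet) = Fintype.card ((⊤ : SimpleGraph (Fin n)).edgeSet) := by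
      exact Fintype.card_congr (Equiv.setCongr (by rw [htop]))
    rw [this, ← SimpleGraph.edgeFinset_card,
      SimpleGraph.card_edgeFinset_top_eq_card_choose_two, Fintype.card_fin]
  have hch := two_choose_two n
  have hcQ : 2 * ((n.choose 2 : ℚ)) + n = (n : ℚ) ^ 2 := by exact_mod_cast hch
  have hsQ : (G.edgeFinset.card : ℚ) + Gᶜ.edgeFinset.card = n.choose 2 := by
    exact_mod_cast hsum
  have h4Q : 2 * (2 * (Gᶜ.edgeFinset.card : ℚ)) ≤ (n : ℚ) ^ 2 + 3 * n := by
    exact_mod_cast key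
  linarith
end
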